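/- arXiv:0810.1460 — 4 statements merged into one kernel-verified Lean document; each statement's English description precedes it below -/
import Mathlib

section
/- Let {T, N, B₁, B₂} be a timelike Frenet frame with curvatures κ₁, κ₂, κ₃ on an open interval I, let U ∈ ℝ⁴ be a fixed vector, and let a₁ = −⟨T,U⟩, a₂ = ⟨N,U⟩, a₃ = ⟨B₁,U⟩, a₄ = ⟨B₂,U⟩. If a₁ is constant on I, then a₂ = 0 on I, a₃ = (κ₁/κ₂)a₁ on I, and a₄ = (a₁/κ₃)·(κ₁/κ₂)′ on I. -/
/-- The Lorentzian (Minkowski) bilinear form on `ℝ⁴`: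
`⟨u,v⟩ = -u₁v₁ + u₂v₂ + u₃v₃ + u₄v₄`. -/
noncomputable def minkProd (u v : Fin 4 → ℝ) : ℝ :=
  -(u 0 * v 0) + u 1 * v 1 + u 2 * v 2 + u 3 * v 3


lemma minkProd_hasDerivAt {F : ℝ → Fin 4 → ℝ} {F' : Fin 4 → ℝ} {s : ℝ}
    (h : HasDerivAt F F' s) (U : Fin 4 → ℝ) :
    HasDerivAt (fun t => minkProd (F t) U) (minkProd F' U) s := by
  have h0 := hasDerivAt_pi.mp h
  simp only [minkProd]
  exact ((((h0 0).mul_const _).neg.add ((h0 1).mul_const _)).add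
    ((h0 2).mul_const _)).add ((h0 3).mul_const _)

lemma minkProd_smul_add (a b : ℝ) (x y u : Fin 4 → ℝ) :
    minkProd (a • x + b • y) u = a * minkProd x u + b * minkProd y u := by
  simp [minkProd, Pi.add_apply, Pi.smul_apply, smul_eq_mul]; ring

lemma minkProd_smul (a : ℝ) (x u : Fin 4 → ℝ) :
    minkProd (a • x) u = a * minkProd x u := by
  simp [minkProd, Pi.smul_apply, smul_eq_mul]; ring

theorem stmt_2
    (Ivl : Set ℝ) (hIopen : IsOpen Ivl) (hIconn : IsConnected Ivl)
    (T N B1 B2 : ℝ → Fin 4 → ℝ) (κ1 κ2 κ3 : ℝ → ℝ)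
    (hTsm : ContDiffOn ℝ (⊤ : ℕ∞) T Ivl) (hNsm : ContDiffOn ℝ (⊤ : ℕ∞) N Ivl)
    (hB1sm : ContDiffOn ℝ (⊤ : ℕ∞) B1 Ivl) (hB2sm : ContDiffOn ℝ (⊤ : ℕ∞) B2 Ivl)
    (hκ1sm : ContDiffOn ℝ (⊤ : ℕ∞) κ1 Ivl) (hκ2sm : ContDiffOn ℝ (⊤ : ℕ∞) κ2 Ivl)
    (hκ3sm : ContDiffOn ℝ (⊤ : ℕ∞) κ3 Ivl)
    (hκ1ne : ∀ s ∈ Ivl, κ1 s ≠ 0) (hκ2ne : ∀ s ∈ Ivl, κ2 s ≠ 0)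
    (hκ3ne : ∀ s ∈ Ivl, κ3 s ≠ 0)
    (hTT : ∀ s ∈ Ivl, minkProd (T s) (T s) = -1)
    (hNN : ∀ s ∈ Ivl, minkProd (N s) (N s) = 1)
    (hB1B1 : ∀ s ∈ Ivl, minkProd (B1 s) (B1 s) = 1)
    (hB2B2 : ∀ s ∈ Ivl, minkProd (B2 s) (B2 s) = 1)
    (hTN : ∀ s ∈ Ivl, minkProd (T s) (N s) = 0)
    (hTB1 : ∀ s ∈ Ivl, minkProd (T s) (B1 s) = 0)
    (hTB2 : ∀ s ∈ Ivl, minkProd (T s) (B2 s) = 0)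
    (hNB1 : ∀ s ∈ Ivl, minkProd (N s) (B1 s) = 0)
    (hNB2 : ∀ s ∈ Ivl, minkProd (N s) (B2 s) = 0)
    (hB1B2 : ∀ s ∈ Ivl, minkProd (B1 s) (B2 s) = 0)
    (hT' : ∀ s ∈ Ivl, HasDerivAt T (κ1 s • N s) s)
    (hN' : ∀ s ∈ Ivl, HasDerivAt N (κ1 s • T s + κ2 s • B1 s) s)
    (hB1' : ∀ s ∈ Ivl, HasDerivAt B1 ((-(κ2 s)) • N s + κ3 s • B2 s) s)
    (hB2' : ∀ s ∈ Ivl, HasDerivAt B2 ((-(κ3 s)) • B1 s) s)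
    (U : Fin 4 → ℝ)
    (h : ∃ c : ℝ, ∀ s ∈ Ivl, -minkProd (T s) U = c) :
    ∀ s ∈ Ivl,
      minkProd (N s) U = 0 ∧
      minkProd (B1 s) U = (κ1 s / κ2 s) * (-minkProd (T s) U) ∧
      minkProd (B2 s) U = ((-minkProd (T s) U) / κ3 s)
        * deriv (fun t => κ1 t / κ2 t) s := by

  obtain ⟨c, hc⟩ := h
  -- Step 1: a2 = 0 on Ivl
  have hNU : ∀ s ∈ Ivl, minkProd (N s) U = 0 := by
    intro s hs
    have hd1 : HasDerivAt (fun t => minkProd (T t) U) (minkProd (κ1 s • N s) U) s :=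
      minkProd_hasDerivAt (hT' s hs) U
    have hev : (fun t => minkProd (T t) U) =ᶠ[nhds s] fun _ => -c := by
      filter_upwards [hIopen.mem_nhds hs] with t ht
      have := hc t ht; linarith
    have hd0 : HasDerivAt (fun t => minkProd (T t) U) 0 s :=
      (hasDerivAt_const s (-c)).congr_of_eventuallyEq hev
    have := hd1.unique hd0
    rw [minkProd_smul] at this
    exact (mul_eq_zero.mp this).resolve_left (hκ1ne s hs)
  -- Step 2: a3 = (κ1/κ2) * c on Ivl
  have hTU : ∀ s ∈ Ivl, minkProd (T s) U = -c := by
    intro s hs; have := hc s hs; linarith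
  have hB1U : ∀ s ∈ Ivl, minkProd (B1 s) U = (κ1 s / κ2 s) * c := by
    intro s hs
    have hd1 : HasDerivAt (fun t => minkProd (N t) U)
        (minkProd (κ1 s • T s + κ2 s • B1 s) U) s :=
      minkProd_hasDerivAt (hN' s hs) U
    have hev : (fun t => minkProd (N t) U) =ᶠ[nhds s] fun _ => (0 : ℝ) := by
      filter_upwards [hIopen.mem_nhds hs] with t ht
      exact hNU t ht
    have hd0 : HasDerivAt (fun t => minkProd (N t) U) 0 s :=
      (hasDerivAt_const s (0 : ℝ)).congr_of_eventuallyEq hev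
    have heq := hd1.unique hd0
    rw [minkProd_smul_add, hTU s hs] at heq
    have hκ2 := hκ2ne s hs
    field_simp
    linarith
  -- Step 3
  intro s hs
  refine ⟨hNU s hs, by rw [hTU s hs, hB1U s hs]; ring, ?_⟩
  have hdκ1 : DifferentiableAt ℝ κ1 s :=
    (hκ1sm.contDiffAt (hIopen.mem_nhds hs)).differentiableAt (by norm_num)
  have hdκ2 : DifferentiableAt ℝ κ2 s :=
    (hκ2sm.contDiffAt (hIopen.mem_nhds hs)).differentiableAt (by norm_num)
  have hq : HasDerivAt (fun t => κ1 t / κ2 t) (deriv (fun t => κ1 t / κ2 t) s) s :=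
    ((hdκ1.div hdκ2 (hκ2ne s hs)).hasDerivAt)
  have hqc : HasDerivAt (fun t => (κ1 t / κ2 t) * c)
      (deriv (fun t => κ1 t / κ2 t) s * c) s := hq.mul_const c
  have hev : (fun t => (κ1 t / κ2 t) * c) =ᶠ[nhds s] fun t => minkProd (B1 t) U := by
    filter_upwards [hIopen.mem_nhds hs] with t ht
    exact (hB1U t ht).symm
  have hd0 : HasDerivAt (fun t => minkProd (B1 t) U)
      (deriv (fun t => κ1 t / κ2 t) s * c) s := hqc.congr_of_eventuallyEq hev.symm
  have hd1 : HasDerivAt (fun t => minkProd (B1 t) U)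
      (minkProd ((-(κ2 s)) • N s + κ3 s • B2 s) U) s :=
    minkProd_hasDerivAt (hB1' s hs) U
  have heq := hd1.unique hd0
  rw [minkProd_smul_add, hNU s hs] at heq
  have hκ3 := hκ3ne s hs
  rw [hTU s hs]
  field_simp at heq ⊢
  linarith
end

section
/- Let {T, N, B₁, B₂} be a timelike Frenet frame with curvatures κ₁, κ₂, κ₃ on an open interval I. If there exists a fixed nonzero vector U ∈ ℝ⁴ such that s ↦ ⟨B₂(s),U⟩ is constant on I, then the function s ↦ (1/κ₁(s)²)·((κ₃/κ₂)′(s))² − (κ₃(s)/κ₂(s))² is constant on I. -/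
open Matrix


lemma hasDerivAt_mink {X : ℝ → Fin 4 → ℝ} {v U : Fin 4 → ℝ} {s : ℝ}
    (hX : HasDerivAt X v s) :
    HasDerivAt (fun t => minkProd (X t) U) (minkProd v U) s := by
  have h := hasDerivAt_pi.mp hX
  unfold minkProd
  exact ((((h 0).mul_const _).neg.add ((h 1).mul_const _)).add ((h 2).mul_const _)).add
    ((h 3).mul_const _)

lemma mink_smul (a : ℝ) (x U : Fin 4 → ℝ) : minkProd (a • x) U = a * minkProd x U := by
  simp [minkProd]; ring

lemma mink_add (x y U : Fin 4 → ℝ) : minkProd (x + y) U = minkProd x U + minkProd y U := by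
  simp [minkProd]; ring

lemma mink_comm (x y : Fin 4 → ℝ) : minkProd x y = minkProd y x := by
  simp [minkProd]; ring

def minkE : Matrix (Fin 4) (Fin 4) ℝ :=
  Matrix.of ![![-1,0,0,0],![0,1,0,0],![0,0,1,0],![0,0,0,1]]

lemma minkE_sq : minkE * minkE = 1 := by
  ext i j
  fin_cases i <;> fin_cases j <;>
    norm_num [minkE, Matrix.mul_apply, Fin.sum_univ_four, Matrix.one_apply,
      Matrix.vecHead, Matrix.vecTail, Fin.ext_iff, Matrix.cons_val_two, Matrix.cons_val_three]

lemma minkE_key (M : Matrix (Fin 4) (Fin 4) ℝ) (i j : Fin 4) :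
    (M * minkE * Mᵀ) i j = minkProd (M i) (M j) := by
  simp [Matrix.mul_apply, Fin.sum_univ_four, minkProd, minkE,
    Matrix.vecHead, Matrix.vecTail, Matrix.transpose_apply]

lemma minkE_vec (M : Matrix (Fin 4) (Fin 4) ℝ) (U : Fin 4 → ℝ) (i : Fin 4) :
    (M * minkE).mulVec U i = minkProd (M i) U := by
  simp [Matrix.mulVec, dotProduct, Matrix.mul_apply, Fin.sum_univ_four, minkProd, minkE,
    Matrix.vecHead, Matrix.vecTail]

lemma frame_nondeg (t n b1 b2 U : Fin 4 → ℝ)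
    (htt : minkProd t t = -1) (hnn : minkProd n n = 1)
    (hb1 : minkProd b1 b1 = 1) (hb2 : minkProd b2 b2 = 1)
    (htn : minkProd t n = 0) (htb1 : minkProd t b1 = 0) (htb2 : minkProd t b2 = 0)
    (hnb1 : minkProd n b1 = 0) (hnb2 : minkProd n b2 = 0) (hb1b2 : minkProd b1 b2 = 0)
    (h0 : minkProd t U = 0) (h1 : minkProd n U = 0)
    (h2 : minkProd b1 U = 0) (h3 : minkProd b2 U = 0) : U = 0 := by
  classical
  have hnt : minkProd n t = 0 := by rw [mink_comm]; exact htn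
  have hb1t : minkProd b1 t = 0 := by rw [mink_comm]; exact htb1
  have hb2t : minkProd b2 t = 0 := by rw [mink_comm]; exact htb2
  have hb1n : minkProd b1 n = 0 := by rw [mink_comm]; exact hnb1
  have hb2n : minkProd b2 n = 0 := by rw [mink_comm]; exact hnb2
  have hb2b1 : minkProd b2 b1 = 0 := by rw [mink_comm]; exact hb1b2
  set M : Matrix (Fin 4) (Fin 4) ℝ := Matrix.of ![t, n, b1, b2] with hM
  have hME : M * minkE * Mᵀ = minkE := by
    ext i j
    rw [minkE_key]
    fin_cases i <;> fin_cases j <;>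
      first
        | exact htt | exact hnn | exact hb1 | exact hb2
        | exact htn | exact htb1 | exact htb2 | exact hnb1 | exact hnb2 | exact hb1b2
        | exact hnt | exact hb1t | exact hb2t | exact hb1n | exact hb2n | exact hb2b1
  have hinv : M * (minkE * Mᵀ * minkE) = 1 := by
    calc M * (minkE * Mᵀ * minkE) = (M * minkE * Mᵀ) * minkE := by
          rw [Matrix.mul_assoc, Matrix.mul_assoc, Matrix.mul_assoc]
    _ = minkE * minkE := by rw [hME]
    _ = 1 := minkE_sq
  have hinv' : (minkE * Mᵀ * minkE) * M = 1 := mul_eq_one_comm.mp hinv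
  have hw : (M * minkE).mulVec U = 0 := by
    ext i
    rw [minkE_vec]
    fin_cases i <;> first | exact h0 | exact h1 | exact h2 | exact h3
  have hker : minkE.mulVec U = 0 := by
    have e : minkE * Mᵀ * minkE * (M * minkE) = minkE := by
      rw [← Matrix.mul_assoc, hinv', Matrix.one_mul]
    rw [← e, ← Matrix.mulVec_mulVec, hw, Matrix.mulVec_zero]
  have hz : (minkE * minkE).mulVec U = 0 := by
    rw [← Matrix.mulVec_mulVec, hker, Matrix.mulVec_zero]
  rw [minkE_sq] at hz
  simpa using hz

lemma stmt9_aux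
    (Ivl : Set ℝ) (hIopen : IsOpen Ivl) (hIconn : IsConnected Ivl)
    (T N B1 B2 : ℝ → Fin 4 → ℝ) (κ1 κ2 κ3 : ℝ → ℝ)
    (hκ2sm : ContDiffOn ℝ (⊤ : ℕ∞) κ2 Ivl)
    (hκ3sm : ContDiffOn ℝ (⊤ : ℕ∞) κ3 Ivl)
    (hκ2ne : ∀ s ∈ Ivl, κ2 s ≠ 0)
    (hκ3ne : ∀ s ∈ Ivl, κ3 s ≠ 0)
    (hT' : ∀ s ∈ Ivl, HasDerivAt T (κ1 s • N s) s)
    (hN' : ∀ s ∈ Ivl, HasDerivAt N (κ1 s • T s + κ2 s • B1 s) s)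
    (hB1' : ∀ s ∈ Ivl, HasDerivAt B1 ((-(κ2 s)) • N s + κ3 s • B2 s) s)
    (hB2' : ∀ s ∈ Ivl, HasDerivAt B2 ((-(κ3 s)) • B1 s) s)
    (U : Fin 4 → ℝ) (c : ℝ) (hc : ∀ s ∈ Ivl, minkProd (B2 s) U = c) :
    (∀ s ∈ Ivl, minkProd (B1 s) U = 0) ∧
    (∀ s ∈ Ivl, minkProd (N s) U = c * (κ3 s / κ2 s)) ∧
    (∀ s ∈ Ivl, κ1 s * minkProd (T s) U = c * deriv (fun t => κ3 t / κ2 t) s) ∧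
    (∀ s ∈ Ivl, ∀ s' ∈ Ivl,
      (minkProd (T s) U)^2 - (minkProd (N s) U)^2
        = (minkProd (T s') U)^2 - (minkProd (N s') U)^2) := by
  have hB1U : ∀ s ∈ Ivl, minkProd (B1 s) U = 0 := by
    intro s hs
    have heq : (fun t => minkProd (B2 t) U) =ᶠ[nhds s] fun _ => c :=
      Filter.eventuallyEq_of_mem (hIopen.mem_nhds hs) (fun t ht => hc t ht)
    have h0 : HasDerivAt (fun t => minkProd (B2 t) U) 0 s :=
      (hasDerivAt_const s c).congr_of_eventuallyEq heq
    have h1 : HasDerivAt (fun t => minkProd (B2 t) U) (minkProd ((-(κ3 s)) • B1 s) U) s :=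
      hasDerivAt_mink (hB2' s hs)
    have := h1.unique h0
    rw [mink_smul] at this
    have h3 := hκ3ne s hs
    field_simp at this
    exact (mul_eq_zero.mp (neg_eq_zero.mp this)).resolve_left h3
  have hNU : ∀ s ∈ Ivl, minkProd (N s) U = c * (κ3 s / κ2 s) := by
    intro s hs
    have heq : (fun t => minkProd (B1 t) U) =ᶠ[nhds s] fun _ => (0:ℝ) :=
      Filter.eventuallyEq_of_mem (hIopen.mem_nhds hs) (fun t ht => hB1U t ht)
    have h0 : HasDerivAt (fun t => minkProd (B1 t) U) 0 s :=
      (hasDerivAt_const s 0).congr_of_eventuallyEq heq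
    have h1 : HasDerivAt (fun t => minkProd (B1 t) U)
        (minkProd ((-(κ2 s)) • N s + κ3 s • B2 s) U) s := hasDerivAt_mink (hB1' s hs)
    have key := h1.unique h0
    rw [mink_add, mink_smul, mink_smul, hc s hs] at key
    have h2 := hκ2ne s hs
    field_simp
    linarith [key]
  have hTU : ∀ s ∈ Ivl, κ1 s * minkProd (T s) U = c * deriv (fun t => κ3 t / κ2 t) s := by
    intro s hs
    have hq : DifferentiableAt ℝ (fun t => κ3 t / κ2 t) s :=
      ((hκ3sm.contDiffAt (hIopen.mem_nhds hs)).differentiableAt (by simp)).div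
        ((hκ2sm.contDiffAt (hIopen.mem_nhds hs)).differentiableAt (by simp)) (hκ2ne s hs)
    have heq : (fun t => minkProd (N t) U) =ᶠ[nhds s] fun t => c * (κ3 t / κ2 t) :=
      Filter.eventuallyEq_of_mem (hIopen.mem_nhds hs) (fun t ht => hNU t ht)
    have h0 : HasDerivAt (fun t => minkProd (N t) U)
        (c * deriv (fun t => κ3 t / κ2 t) s) s :=
      (hq.hasDerivAt.const_mul c).congr_of_eventuallyEq heq
    have h1 : HasDerivAt (fun t => minkProd (N t) U)
        (minkProd (κ1 s • T s + κ2 s • B1 s) U) s := hasDerivAt_mink (hN' s hs)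
    have key := h1.unique h0
    rw [mink_add, mink_smul, mink_smul, hB1U s hs] at key
    linarith [key]
  refine ⟨hB1U, hNU, hTU, ?_⟩
  have hconv : Convex ℝ Ivl := hIconn.isPreconnected.ordConnected.convex
  set φ : ℝ → ℝ := fun t => (minkProd (T t) U)^2 - (minkProd (N t) U)^2 with hφ
  have hφ' : ∀ s ∈ Ivl, HasDerivAt φ 0 s := by
    intro s hs
    have hf : HasDerivAt (fun t => minkProd (T t) U) (minkProd (κ1 s • N s) U) s :=
      hasDerivAt_mink (hT' s hs)
    have hg : HasDerivAt (fun t => minkProd (N t) U)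
        (minkProd (κ1 s • T s + κ2 s • B1 s) U) s := hasDerivAt_mink (hN' s hs)
    have h := ((hf.pow 2).sub (hg.pow 2))
    refine h.congr_deriv ?_
    rw [mink_add, mink_smul, mink_smul, mink_smul, hB1U s hs]
    ring
  intro s hs s' hs'
  have hdiff : DifferentiableOn ℝ φ Ivl := fun x hx =>
    ((hφ' x hx).differentiableAt).differentiableWithinAt
  have hfd : ∀ x ∈ Ivl, fderivWithin ℝ φ Ivl x = 0 := by
    intro x hx
    rw [(hφ' x hx).hasFDerivAt.hasFDerivWithinAt.fderivWithin (hIopen.uniqueDiffWithinAt hx)]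
    ext y; simp
  exact hconv.is_const_of_fderivWithin_eq_zero hdiff hfd hs hs'

theorem stmt_9
    (Ivl : Set ℝ) (hIopen : IsOpen Ivl) (hIconn : IsConnected Ivl)
    (T N B1 B2 : ℝ → Fin 4 → ℝ) (κ1 κ2 κ3 : ℝ → ℝ)
    (hTsm : ContDiffOn ℝ (⊤ : ℕ∞) T Ivl) (hNsm : ContDiffOn ℝ (⊤ : ℕ∞) N Ivl)
    (hB1sm : ContDiffOn ℝ (⊤ : ℕ∞) B1 Ivl) (hB2sm : ContDiffOn ℝ (⊤ : ℕ∞) B2 Ivl)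
    (hκ1sm : ContDiffOn ℝ (⊤ : ℕ∞) κ1 Ivl) (hκ2sm : ContDiffOn ℝ (⊤ : ℕ∞) κ2 Ivl)
    (hκ3sm : ContDiffOn ℝ (⊤ : ℕ∞) κ3 Ivl)
    (hκ1ne : ∀ s ∈ Ivl, κ1 s ≠ 0) (hκ2ne : ∀ s ∈ Ivl, κ2 s ≠ 0)
    (hκ3ne : ∀ s ∈ Ivl, κ3 s ≠ 0)
    (hTT : ∀ s ∈ Ivl, minkProd (T s) (T s) = -1)
    (hNN : ∀ s ∈ Ivl, minkProd (N s) (N s) = 1)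
    (hB1B1 : ∀ s ∈ Ivl, minkProd (B1 s) (B1 s) = 1)
    (hB2B2 : ∀ s ∈ Ivl, minkProd (B2 s) (B2 s) = 1)
    (hTN : ∀ s ∈ Ivl, minkProd (T s) (N s) = 0)
    (hTB1 : ∀ s ∈ Ivl, minkProd (T s) (B1 s) = 0)
    (hTB2 : ∀ s ∈ Ivl, minkProd (T s) (B2 s) = 0)
    (hNB1 : ∀ s ∈ Ivl, minkProd (N s) (B1 s) = 0)
    (hNB2 : ∀ s ∈ Ivl, minkProd (N s) (B2 s) = 0)
    (hB1B2 : ∀ s ∈ Ivl, minkProd (B1 s) (B2 s) = 0)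
    (hT' : ∀ s ∈ Ivl, HasDerivAt T (κ1 s • N s) s)
    (hN' : ∀ s ∈ Ivl, HasDerivAt N (κ1 s • T s + κ2 s • B1 s) s)
    (hB1' : ∀ s ∈ Ivl, HasDerivAt B1 ((-(κ2 s)) • N s + κ3 s • B2 s) s)
    (hB2' : ∀ s ∈ Ivl, HasDerivAt B2 ((-(κ3 s)) • B1 s) s)
    (h : ∃ U : Fin 4 → ℝ, U ≠ 0 ∧ ∃ c : ℝ, ∀ s ∈ Ivl, minkProd (B2 s) U = c) :
    ∃ c : ℝ, ∀ s ∈ Ivl,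
      (1 / (κ1 s) ^ 2) * (deriv (fun t => κ3 t / κ2 t) s) ^ 2
        - (κ3 s / κ2 s) ^ 2 = c := by
  obtain ⟨U, hU, c, hc⟩ := h
  obtain ⟨hB1U, hNU, hTU, hconst⟩ := stmt9_aux Ivl hIopen hIconn T N B1 B2 κ1 κ2 κ3
    hκ2sm hκ3sm hκ2ne hκ3ne hT' hN' hB1' hB2' U c hc
  obtain ⟨s₀, hs₀⟩ := hIconn.nonempty
  by_cases hc0 : c = 0
  · exfalso
    apply hU
    have hT0 : minkProd (T s₀) U = 0 := by
      have := hTU s₀ hs₀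
      rw [hc0] at this
      have hκ := hκ1ne s₀ hs₀
      field_simp at this
      exact (mul_eq_zero.mp (this.trans (zero_mul _))).resolve_left hκ
    have hN0 : minkProd (N s₀) U = 0 := by rw [hNU s₀ hs₀, hc0]; ring
    have hB20 : minkProd (B2 s₀) U = 0 := by rw [hc s₀ hs₀, hc0]
    exact frame_nondeg (T s₀) (N s₀) (B1 s₀) (B2 s₀) U (hTT s₀ hs₀) (hNN s₀ hs₀)
      (hB1B1 s₀ hs₀) (hB2B2 s₀ hs₀) (hTN s₀ hs₀) (hTB1 s₀ hs₀) (hTB2 s₀ hs₀)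
      (hNB1 s₀ hs₀) (hNB2 s₀ hs₀) (hB1B2 s₀ hs₀)
      hT0 hN0 (hB1U s₀ hs₀) hB20
  · refine ⟨((minkProd (T s₀) U)^2 - (minkProd (N s₀) U)^2) / c^2, ?_⟩
    intro s hs
    have hκ := hκ1ne s hs
    have hf : minkProd (T s) U = c * deriv (fun t => κ3 t / κ2 t) s / κ1 s := by
      have := hTU s hs
      field_simp
      linarith [this]
    have hg := hNU s hs
    rw [← hconst s hs s₀ hs₀, hf, hg]
    field_simp
end

section
/- Let {T, N, B₁, B₂} be a timelike Frenet frame with curvatures κ₁, κ₂, κ₃ on an open interval I, let U ∈ ℝ⁴ be a fixed nonzero vector such that a₄ = ⟨B₂,U⟩ is constant on I, and let m denote the constant value of (1/κ₁²)·((κ₃/κ₂)′)² − (κ₃/κ₂)² on I. Then m·a₄² = a₄² − ⟨U,U⟩. In particular, if ⟨U,U⟩ ≤ 0 (U timelike or lightlike) then m > 0, and m = 0 if and only if a₄² = ⟨U,U⟩. -/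
open Matrix

lemma mink_hasDerivAt {X : ℝ → Fin 4 → ℝ} {D : Fin 4 → ℝ} (U : Fin 4 → ℝ) {s : ℝ}
    (hX : HasDerivAt X D s) :
    HasDerivAt (fun t => minkProd (X t) U) (minkProd D U) s := by
  have h : ∀ i, HasDerivAt (fun t => X t i) (D i) s := fun i => hasDerivAt_pi.1 hX i
  have := ((((h 0).mul_const (U 0)).neg.add ((h 1).mul_const (U 1))).add
    ((h 2).mul_const (U 2))).add ((h 3).mul_const (U 3))
  exact this.congr_of_eventuallyEq (Filter.Eventually.of_forall fun t => by simp [minkProd])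

lemma mink_symm (u v : Fin 4 → ℝ) : minkProd u v = minkProd v u := by
  simp [minkProd]; ring

lemma mink_expandL (t n c u : Fin 4 → ℝ) (p q r : ℝ) :
    minkProd (p • t + q • n + r • c) u
      = p * minkProd t u + q * minkProd n u + r * minkProd c u := by
  simp only [minkProd, Pi.add_apply, Pi.smul_apply, smul_eq_mul]; ring

lemma mink_subL (x u w : Fin 4 → ℝ) :
    minkProd x (u - w) = minkProd x u - minkProd x w := by
  simp only [minkProd, Pi.sub_apply]; ring

lemma mink_smul_left (p : ℝ) (x u : Fin 4 → ℝ) :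
    minkProd (p • x) u = p * minkProd x u := by
  simp only [minkProd, Pi.smul_apply, smul_eq_mul]; ring

lemma mink_add_left (x y u : Fin 4 → ℝ) :
    minkProd (x + y) u = minkProd x u + minkProd y u := by
  simp only [minkProd, Pi.add_apply]; ring

lemma orth_eq_zero (t n b c V : Fin 4 → ℝ)
    (htt : minkProd t t = -1) (hnn : minkProd n n = 1)
    (hbb : minkProd b b = 1) (hcc : minkProd c c = 1)
    (htn : minkProd t n = 0) (htb : minkProd t b = 0) (htc : minkProd t c = 0)
    (hnb : minkProd n b = 0) (hnc : minkProd n c = 0) (hbc : minkProd b c = 0)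
    (h1 : minkProd t V = 0) (h2 : minkProd n V = 0)
    (h3 : minkProd b V = 0) (h4 : minkProd c V = 0) : V = 0 := by
  set d : Fin 4 → ℝ := ![(-1 : ℝ), 1, 1, 1] with hd
  set M : Matrix (Fin 4) (Fin 4) ℝ := Matrix.of ![t, n, b, c] with hM
  have hMη : M * Matrix.diagonal d * Mᵀ = Matrix.diagonal d := by
    ext i j
    simp only [Matrix.mul_apply, Matrix.mul_diagonal, Matrix.transpose_apply,
      Fin.sum_univ_four]
    fin_cases i <;> fin_cases j <;>
      simp [hM, hd, Matrix.diagonal, minkProd] at htt hnn hbb hcc htn htb htc hnb hnc hbc ⊢ <;>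
      linarith
  have hdet : M.det ≠ 0 := by
    have hA : (M * Matrix.diagonal d * Mᵀ).det = (Matrix.diagonal d).det := by rw [hMη]
    rw [Matrix.det_mul, Matrix.det_mul, Matrix.det_transpose] at hA
    have hB : (Matrix.diagonal d).det = -1 := by
      simp [Matrix.det_diagonal, Fin.prod_univ_four, hd]
    intro h
    rw [h, hB] at hA
    norm_num at hA
  have hmv : M.mulVec (fun i => d i * V i) = 0 := by
    funext i
    simp only [Matrix.mulVec, dotProduct, Fin.sum_univ_four, Pi.zero_apply]
    fin_cases i <;>
      simp [hM, hd, minkProd] at h1 h2 h3 h4 ⊢ <;> linarith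
  have hv : (fun i => d i * V i) = 0 := Matrix.eq_zero_of_mulVec_eq_zero hdet hmv
  funext i
  have := congrFun hv i
  fin_cases i <;> simp [hd] at this ⊢ <;> linarith

theorem stmt_12
    (Ivl : Set ℝ) (hIopen : IsOpen Ivl) (hIconn : IsConnected Ivl)
    (T N B1 B2 : ℝ → Fin 4 → ℝ) (κ1 κ2 κ3 : ℝ → ℝ)
    (hTsm : ContDiffOn ℝ (⊤ : ℕ∞) T Ivl) (hNsm : ContDiffOn ℝ (⊤ : ℕ∞) N Ivl)
    (hB1sm : ContDiffOn ℝ (⊤ : ℕ∞) B1 Ivl) (hB2sm : ContDiffOn ℝ (⊤ : ℕ∞) B2 Ivl)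
    (hκ1sm : ContDiffOn ℝ (⊤ : ℕ∞) κ1 Ivl) (hκ2sm : ContDiffOn ℝ (⊤ : ℕ∞) κ2 Ivl)
    (hκ3sm : ContDiffOn ℝ (⊤ : ℕ∞) κ3 Ivl)
    (hκ1ne : ∀ s ∈ Ivl, κ1 s ≠ 0) (hκ2ne : ∀ s ∈ Ivl, κ2 s ≠ 0)
    (hκ3ne : ∀ s ∈ Ivl, κ3 s ≠ 0)
    (hTT : ∀ s ∈ Ivl, minkProd (T s) (T s) = -1)
    (hNN : ∀ s ∈ Ivl, minkProd (N s) (N s) = 1)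
    (hB1B1 : ∀ s ∈ Ivl, minkProd (B1 s) (B1 s) = 1)
    (hB2B2 : ∀ s ∈ Ivl, minkProd (B2 s) (B2 s) = 1)
    (hTN : ∀ s ∈ Ivl, minkProd (T s) (N s) = 0)
    (hTB1 : ∀ s ∈ Ivl, minkProd (T s) (B1 s) = 0)
    (hTB2 : ∀ s ∈ Ivl, minkProd (T s) (B2 s) = 0)
    (hNB1 : ∀ s ∈ Ivl, minkProd (N s) (B1 s) = 0)
    (hNB2 : ∀ s ∈ Ivl, minkProd (N s) (B2 s) = 0)
    (hB1B2 : ∀ s ∈ Ivl, minkProd (B1 s) (B2 s) = 0)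
    (hT' : ∀ s ∈ Ivl, HasDerivAt T (κ1 s • N s) s)
    (hN' : ∀ s ∈ Ivl, HasDerivAt N (κ1 s • T s + κ2 s • B1 s) s)
    (hB1' : ∀ s ∈ Ivl, HasDerivAt B1 ((-(κ2 s)) • N s + κ3 s • B2 s) s)
    (hB2' : ∀ s ∈ Ivl, HasDerivAt B2 ((-(κ3 s)) • B1 s) s)
    (U : Fin 4 → ℝ) (hUne : U ≠ 0)
    (a4 : ℝ) (ha4 : ∀ s ∈ Ivl, minkProd (B2 s) U = a4)
    (m : ℝ)
    (hm : ∀ s ∈ Ivl,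
      (1 / (κ1 s) ^ 2) * (deriv (fun t => κ3 t / κ2 t) s) ^ 2
        - (κ3 s / κ2 s) ^ 2 = m) :
    m * a4 ^ 2 = a4 ^ 2 - minkProd U U ∧
    (minkProd U U ≤ 0 → 0 < m) ∧
    (m = 0 ↔ a4 ^ 2 = minkProd U U) := by
  obtain ⟨s0, hs0⟩ := hIconn.nonempty
  -- Step 1 : ⟨B1 s, U⟩ = 0 on Ivl
  have ha3 : ∀ s ∈ Ivl, minkProd (B1 s) U = 0 := by
    intro s hs
    have hd1 : HasDerivAt (fun t => minkProd (B2 t) U) (minkProd ((-(κ3 s)) • B1 s) U) s :=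
      mink_hasDerivAt U (hB2' s hs)
    have heq : (fun t => minkProd (B2 t) U) =ᶠ[nhds s] fun _ => a4 :=
      Filter.eventuallyEq_of_mem (hIopen.mem_nhds hs) (fun t ht => ha4 t ht)
    have hd2 : HasDerivAt (fun t => minkProd (B2 t) U) 0 s :=
      (hasDerivAt_const s a4).congr_of_eventuallyEq heq
    have h0 := hd1.unique hd2
    rw [mink_smul_left] at h0
    have := hκ3ne s hs
    have : -(κ3 s) ≠ 0 := by simpa using this
    exact (mul_eq_zero.1 h0).resolve_left this
  -- Step 2 : κ2 s * ⟨N s, U⟩ = κ3 s * a4 on Ivl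
  have ha2f : ∀ s ∈ Ivl, κ2 s * minkProd (N s) U = κ3 s * a4 := by
    intro s hs
    have hd1 : HasDerivAt (fun t => minkProd (B1 t) U)
        (minkProd ((-(κ2 s)) • N s + κ3 s • B2 s) U) s :=
      mink_hasDerivAt U (hB1' s hs)
    have heq : (fun t => minkProd (B1 t) U) =ᶠ[nhds s] fun _ => (0 : ℝ) :=
      Filter.eventuallyEq_of_mem (hIopen.mem_nhds hs) (fun t ht => ha3 t ht)
    have hd2 : HasDerivAt (fun t => minkProd (B1 t) U) 0 s :=
      (hasDerivAt_const s (0 : ℝ)).congr_of_eventuallyEq heq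
    have h0 := hd1.unique hd2
    rw [mink_add_left, mink_smul_left, mink_smul_left, ha4 s hs] at h0
    linarith
  set a1 : ℝ := minkProd (T s0) U with ha1def
  set a2 : ℝ := minkProd (N s0) U with ha2def
  have ha2v : κ2 s0 * a2 = κ3 s0 * a4 := ha2f s0 hs0
  set f' : ℝ := deriv (fun t => κ3 t / κ2 t) s0 with hf'def
  -- Step 3 : κ1 s0 * a1 = a4 * f'
  have hk1 : κ1 s0 ≠ 0 := hκ1ne s0 hs0
  have hk2 : κ2 s0 ≠ 0 := hκ2ne s0 hs0
  have hkA : κ1 s0 * a1 = a4 * f' := by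
    have hk2d : DifferentiableAt ℝ κ2 s0 :=
      (hκ2sm.contDiffAt (hIopen.mem_nhds hs0)).differentiableAt (by simp)
    have hk3d : DifferentiableAt ℝ κ3 s0 :=
      (hκ3sm.contDiffAt (hIopen.mem_nhds hs0)).differentiableAt (by simp)
    have hfd : DifferentiableAt ℝ (fun t => κ3 t / κ2 t) s0 := hk3d.div hk2d hk2
    have hd1 : HasDerivAt (fun t => minkProd (N t) U)
        (minkProd (κ1 s0 • T s0 + κ2 s0 • B1 s0) U) s0 :=
      mink_hasDerivAt U (hN' s0 hs0)
    have heq : (fun t => minkProd (N t) U) =ᶠ[nhds s0] fun t => a4 * (κ3 t / κ2 t) := by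
      refine Filter.eventuallyEq_of_mem (hIopen.mem_nhds hs0) (fun t ht => ?_)
      have h := ha2f t ht
      have hk2t := hκ2ne t ht
      field_simp
      linarith
    have hd2 : HasDerivAt (fun t => minkProd (N t) U) (a4 * f') s0 :=
      (hfd.hasDerivAt.const_mul a4).congr_of_eventuallyEq heq
    have h0 := hd1.unique hd2
    rw [mink_add_left, mink_smul_left, mink_smul_left, ha3 s0 hs0, ← ha1def] at h0
    linarith
  -- Step 4 : expansion of U in the frame
  have hU : U = (-(a1)) • T s0 + a2 • N s0 + a4 • B2 s0 := by
    set W : Fin 4 → ℝ := (-(a1)) • T s0 + a2 • N s0 + a4 • B2 s0 with hW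
    have hVzero : U - W = 0 := by
      refine orth_eq_zero (T s0) (N s0) (B1 s0) (B2 s0) (U - W)
        (hTT s0 hs0) (hNN s0 hs0) (hB1B1 s0 hs0) (hB2B2 s0 hs0)
        (hTN s0 hs0) (hTB1 s0 hs0) (hTB2 s0 hs0)
        (hNB1 s0 hs0) (hNB2 s0 hs0) (hB1B2 s0 hs0) ?_ ?_ ?_ ?_
      · rw [mink_subL, hW, mink_symm _ ((-(a1)) • T s0 + a2 • N s0 + a4 • B2 s0),
          mink_expandL, hTT s0 hs0, mink_symm (N s0) (T s0), hTN s0 hs0,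
          mink_symm (B2 s0) (T s0), hTB2 s0 hs0, ← ha1def]
        ring
      · rw [mink_subL, hW, mink_symm _ ((-(a1)) • T s0 + a2 • N s0 + a4 • B2 s0),
          mink_expandL, hTN s0 hs0, hNN s0 hs0,
          mink_symm (B2 s0) (N s0), hNB2 s0 hs0, ← ha2def]
        ring
      · rw [mink_subL, hW, mink_symm _ ((-(a1)) • T s0 + a2 • N s0 + a4 • B2 s0),
          mink_expandL, hTB1 s0 hs0, hNB1 s0 hs0, mink_symm (B2 s0) (B1 s0),
          hB1B2 s0 hs0, ha3 s0 hs0]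
        ring
      · rw [mink_subL, hW, mink_symm _ ((-(a1)) • T s0 + a2 • N s0 + a4 • B2 s0),
          mink_expandL, hTB2 s0 hs0, hNB2 s0 hs0, hB2B2 s0 hs0, ha4 s0 hs0]
        ring
    have := sub_eq_zero.1 hVzero
    rw [this, hW]
  have hUU : minkProd U U = -(a1 ^ 2) + a2 ^ 2 + a4 ^ 2 := by
    nth_rewrite 1 [hU]
    rw [mink_expandL, ha4 s0 hs0, ← ha1def, ← ha2def]
    ring
  -- a4 ≠ 0
  have ha4ne : a4 ≠ 0 := by
    intro h0
    have ha2z : a2 = 0 := by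
      have := ha2v; rw [h0, mul_zero] at this
      exact (mul_eq_zero.1 this).resolve_left hk2
    have ha1z : a1 = 0 := by
      have := hkA; rw [h0, zero_mul] at this
      exact (mul_eq_zero.1 this).resolve_left hk1
    apply hUne
    rw [hU, ha1z, ha2z, h0]
    simp
  have ha4sq : (0 : ℝ) < a4 ^ 2 := by positivity
  -- main identity
  have hms0 := hm s0 hs0
  rw [← hf'def] at hms0
  have h4 : f' ^ 2 * (κ2 s0) ^ 2 - (κ3 s0) ^ 2 * (κ1 s0) ^ 2
      = m * ((κ1 s0) ^ 2 * (κ2 s0) ^ 2) := by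
    have h := hms0
    field_simp at h
    linear_combination h
  have h3 : (κ1 s0 * a1) ^ 2 = a4 ^ 2 * f' ^ 2 := by rw [hkA]; ring
  have h2' : (κ2 s0 * a2) ^ 2 = (κ3 s0) ^ 2 * a4 ^ 2 := by rw [ha2v]; ring
  have h5 : (κ1 s0) ^ 2 * (κ2 s0) ^ 2 * (m * a4 ^ 2)
      = (κ1 s0) ^ 2 * (κ2 s0) ^ 2 * (a1 ^ 2 - a2 ^ 2) := by
    linear_combination (-(a4 ^ 2)) * h4 - (κ2 s0) ^ 2 * h3 + (κ1 s0) ^ 2 * h2'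
  have key : m * a4 ^ 2 = a1 ^ 2 - a2 ^ 2 := by
    have hne : (κ1 s0) ^ 2 * (κ2 s0) ^ 2 ≠ 0 := by positivity
    exact mul_left_cancel₀ hne h5
  have part1 : m * a4 ^ 2 = a4 ^ 2 - minkProd U U := by
    rw [hUU]; linarith
  refine ⟨part1, fun h => ?_, ?_, ?_⟩
  · nlinarith [part1, ha4sq, h]
  · intro h0
    rw [h0] at part1
    nlinarith [part1]
  · intro h
    have hz : m * a4 ^ 2 = 0 := by rw [part1, h]; ring
    rcases mul_eq_zero.1 hz with h' | h'
    · exact h'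
    · exact absurd h' (by positivity)
end

section
/- Let I ⊆ ℝ be an open interval, let κ₁, κ₂, κ₃ : I → ℝ be smooth with κ₁ and κ₂ nowhere zero, and define f(s) = (1/κ₁(s))·(κ₃/κ₂)′(s). If f′(s) = κ₁(s)·κ₃(s)/κ₂(s) for all s ∈ I, then the derivative of the function s ↦ f(s)² − f′(s)²/κ₁(s)² vanishes identically on I; equivalently, (1/κ₁²)·((κ₃/κ₂)′)² − (κ₃/κ₂)² is constant on I. -/
theorem stmt_17
    (Ivl : Set ℝ) (hIopen : IsOpen Ivl) (hIconn : IsConnected Ivl)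
    (κ1 κ2 κ3 : ℝ → ℝ)
    (hκ1sm : ContDiffOn ℝ (⊤ : ℕ∞) κ1 Ivl) (hκ2sm : ContDiffOn ℝ (⊤ : ℕ∞) κ2 Ivl)
    (hκ3sm : ContDiffOn ℝ (⊤ : ℕ∞) κ3 Ivl)
    (hκ1ne : ∀ s ∈ Ivl, κ1 s ≠ 0) (hκ2ne : ∀ s ∈ Ivl, κ2 s ≠ 0)
    (f : ℝ → ℝ)
    (hf : ∀ s, f s = (1 / κ1 s) * deriv (fun t => κ3 t / κ2 t) s)
    (hf' : ∀ s ∈ Ivl, deriv f s = κ1 s * κ3 s / κ2 s) :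
    (∀ s ∈ Ivl, deriv (fun t => f t ^ 2 - (deriv f t) ^ 2 / (κ1 t) ^ 2) s = 0) ∧
    (∃ c : ℝ, ∀ s ∈ Ivl,
      (1 / (κ1 s) ^ 2) * (deriv (fun t => κ3 t / κ2 t) s) ^ 2
        - (κ3 s / κ2 s) ^ 2 = c) := by
  set q : ℝ → ℝ := fun t => κ3 t / κ2 t with hq
  -- q is smooth on Ivl
  have hqsm : ContDiffOn ℝ (⊤ : ℕ∞) q Ivl := hκ3sm.div hκ2sm hκ2ne
  have hq'sm : ContDiffOn ℝ (⊤ : ℕ∞) (deriv q) Ivl := hqsm.deriv_of_isOpen hIopen (by simp)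
  have hfeq : f = fun s => (1 / κ1 s) * deriv q s := funext hf
  have hfsm : ContDiffOn ℝ (⊤ : ℕ∞) f Ivl := by
    rw [hfeq]
    exact (contDiffOn_const.div hκ1sm hκ1ne).mul hq'sm
  -- differentiability at points of Ivl
  have hfd : ∀ s ∈ Ivl, DifferentiableAt ℝ f s := fun s hs =>
    (hfsm.differentiableOn (by simp)).differentiableAt (hIopen.mem_nhds hs)
  have hqd : ∀ s ∈ Ivl, DifferentiableAt ℝ q s := fun s hs =>
    (hqsm.differentiableOn (by simp)).differentiableAt (hIopen.mem_nhds hs)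
  -- derivative relations
  have hderq : ∀ s ∈ Ivl, deriv q s = κ1 s * f s := by
    intro s hs
    rw [hf s]
    field_simp [hκ1ne s hs]
  have hderf : ∀ s ∈ Ivl, deriv f s = κ1 s * q s := by
    intro s hs
    rw [hf' s hs, hq]
    ring
  -- the auxiliary function h
  set h : ℝ → ℝ := fun t => f t ^ 2 - q t ^ 2 with hh
  have hderh : ∀ s ∈ Ivl, HasDerivAt h 0 s := by
    intro s hs
    have H := (((hfd s hs).hasDerivAt).pow 2).sub (((hqd s hs).hasDerivAt).pow 2)
    norm_num at H
    have h0 : 2 * f s * deriv f s - 2 * q s * deriv q s = 0 := by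
      rw [hderf s hs, hderq s hs]; ring
    rwa [h0] at H
  -- part 1
  have part1 : ∀ s ∈ Ivl, deriv (fun t => f t ^ 2 - (deriv f t) ^ 2 / (κ1 t) ^ 2) s = 0 := by
    intro s hs
    have hev : (fun t => f t ^ 2 - (deriv f t) ^ 2 / (κ1 t) ^ 2) =ᶠ[nhds s] h := by
      filter_upwards [hIopen.mem_nhds hs] with t ht
      have h1 : κ1 t ≠ 0 := hκ1ne t ht
      rw [hderf t ht, hh]
      field_simp
    rw [hev.deriv_eq]
    exact (hderh s hs).deriv
  refine ⟨part1, ?_⟩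
  -- part 2: h is constant on Ivl
  obtain ⟨s₀, hs₀⟩ := hIconn.nonempty
  have hconv : Convex ℝ Ivl := hIconn.isPreconnected.convex
  have hdiff : DifferentiableOn ℝ h Ivl := fun s hs =>
    (((hfd s hs).pow 2).sub ((hqd s hs).pow 2)).differentiableWithinAt
  have hconst : ∀ s ∈ Ivl, h s = h s₀ := by
    intro s hs
    refine hconv.is_const_of_fderivWithin_eq_zero hdiff (fun z hz => ?_) hs hs₀
    have := ((hderh z hz).hasFDerivAt).hasFDerivWithinAt.fderivWithin
      (hIopen.uniqueDiffWithinAt hz)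
    rw [this]
    ext
    simp
  refine ⟨h s₀, fun s hs => ?_⟩
  have h1 : κ1 s ≠ 0 := hκ1ne s hs
  have : (1 / (κ1 s) ^ 2) * (deriv q s) ^ 2 - (q s) ^ 2 = h s := by
    rw [hderq s hs, hh]
    field_simp
  rw [hq] at this
  rw [this]
  exact hconst s hs
end
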